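/- arXiv:1309.5625 — 6 statements merged into one kernel-verified Lean document; each statement's English description precedes it below -/
import Mathlib

section
/- Let a, b, c, α, β, σ > 0 with b > aβ, and let K = 2bc + σ² + 2aα + a²β, μ = (bc+aα)/(b-aβ), δ = b - aβ. If M(s) satisfies M'(s) = K·m(s) + a²α - 2δ M(s) with M(t) = r², where m(s) = μ - e^{-δ(s-t)}(μ - r), then M(s) = r² e^{-2δ(s-t)} + [Kμ/(2δ) + a²α/(2δ)](1 - e^{-2δ(s-t)}) - (Kμ/δ)(e^{-δ(s-t)} - e^{-2δ(s-t)}) + (Kr/δ)(e^{-δ(s-t)} - e^{-2δ(s-t)}), i.e., the second-moment formula of Proposition 2.1(ii) holds. -/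
open Real

/-- Second conditional moment of the CIR process with Hawkes jumps: explicit solution of
`M' = K m + a²α - 2δ M`, `M t = r²`, with `m` the conditional first moment. -/
theorem cir_hawkes_second_moment (a b c α β σ t r : ℝ)
    (ha : 0 < a) (hb : 0 < b) (hc : 0 < c) (hα : 0 < α) (hβ : 0 < β) (hσ : 0 < σ)
    (hba : a * β < b)
    (K δ μ : ℝ)
    (hK : K = 2 * b * c + σ ^ 2 + 2 * a * α + a ^ 2 * β)
    (hδ : δ = b - a * β)
    (hμ : μ = (b * c + a * α) / (b - a * β))
    (m M : ℝ → ℝ)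
    (hm : ∀ s, m s = μ - Real.exp (-δ * (s - t)) * (μ - r))
    (hM : ∀ s, t ≤ s → HasDerivAt M (K * m s + a ^ 2 * α - 2 * δ * M s) s)
    (hM0 : M t = r ^ 2) :
    ∀ s, t ≤ s →
      M s = r ^ 2 * Real.exp (-2 * δ * (s - t))
        + (K * μ / (2 * δ) + a ^ 2 * α / (2 * δ)) * (1 - Real.exp (-2 * δ * (s - t)))
        - (K * μ / δ) * (Real.exp (-δ * (s - t)) - Real.exp (-2 * δ * (s - t)))
        + (K * r / δ) * (Real.exp (-δ * (s - t)) - Real.exp (-2 * δ * (s - t))) := by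
  have hδpos : 0 < δ := by rw [hδ]; linarith
  have hδne : δ ≠ 0 := ne_of_gt hδpos
  set F : ℝ → ℝ := fun u => r ^ 2 * Real.exp (-2 * δ * (u - t))
        + (K * μ / (2 * δ) + a ^ 2 * α / (2 * δ)) * (1 - Real.exp (-2 * δ * (u - t)))
        - (K * μ / δ) * (Real.exp (-δ * (u - t)) - Real.exp (-2 * δ * (u - t)))
        + (K * r / δ) * (Real.exp (-δ * (u - t)) - Real.exp (-2 * δ * (u - t))) with hF
  have hE1 : ∀ u : ℝ, HasDerivAt (fun v => Real.exp (-δ * (v - t)))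
      (-δ * Real.exp (-δ * (u - t))) u := by
    intro u
    have h : HasDerivAt (fun v : ℝ => -δ * (v - t)) (-δ) u := by
      simpa using ((hasDerivAt_id u).sub_const t).const_mul (-δ)
    simpa [mul_comm] using h.exp
  have hE2 : ∀ u : ℝ, HasDerivAt (fun v => Real.exp (-2 * δ * (v - t)))
      (-2 * δ * Real.exp (-2 * δ * (u - t))) u := by
    intro u
    have h : HasDerivAt (fun v : ℝ => -2 * δ * (v - t)) (-2 * δ) u := by
      simpa using ((hasDerivAt_id u).sub_const t).const_mul (-2 * δ)
    simpa [mul_comm] using h.exp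
  have hFd : ∀ u : ℝ, HasDerivAt F (K * m u + a ^ 2 * α - 2 * δ * F u) u := by
    intro u
    have h1 := hE1 u
    have h2 := hE2 u
    have hD := (((h2.const_mul (r ^ 2)).add
        (((hasDerivAt_const u (1 : ℝ)).sub h2).const_mul
          (K * μ / (2 * δ) + a ^ 2 * α / (2 * δ)))).sub
        ((h1.sub h2).const_mul (K * μ / δ))).add
        ((h1.sub h2).const_mul (K * r / δ))
    refine hD.congr_deriv (Eq.symm ?_)
    rw [hm, hF]
    field_simp
    ring
  intro s hs
  set G : ℝ → ℝ := fun u => (M u - F u) * Real.exp (2 * δ * (u - t)) with hG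
  have hEexp : ∀ u : ℝ, HasDerivAt (fun v => Real.exp (2 * δ * (v - t)))
      (2 * δ * Real.exp (2 * δ * (u - t))) u := by
    intro u
    have h : HasDerivAt (fun v : ℝ => 2 * δ * (v - t)) (2 * δ) u := by
      simpa using ((hasDerivAt_id u).sub_const t).const_mul (2 * δ)
    simpa [mul_comm] using h.exp
  have hGd : ∀ u, t ≤ u → HasDerivAt G 0 u := by
    intro u hu
    have hD := (((hM u hu).sub (hFd u)).mul (hEexp u))
    refine hD.congr_deriv (Eq.symm ?_)
    rw [Pi.sub_apply]
    ring
  have hGconst : ∀ x ∈ Set.Icc t s, G x = G t := by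
    apply constant_of_has_deriv_right_zero
    · intro x hx
      exact ((hGd x hx.1).continuousAt).continuousWithinAt
    · intro x hx
      exact (hGd x hx.1).hasDerivWithinAt
  have hGs : G s = G t := hGconst s ⟨hs, le_refl s⟩
  have hGt : G t = 0 := by
    have hFt : F t = r ^ 2 := by
      rw [hF]; simp
    rw [hG]
    simp [hM0, hFt]
  have : (M s - F s) * Real.exp (2 * δ * (s - t)) = 0 := hGs.trans hGt
  have hMF : M s - F s = 0 := by
    rcases mul_eq_zero.mp this with h | h
    · exact h
    · exact absurd h (Real.exp_ne_zero _)
  have : M s = F s := by linarith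
  rw [this, hF]
end

section
/- Let a, b, σ, β > 0 with b > aβ. For θ ≤ θ_c let y(θ) denote the smaller solution of -b y + (1/2)σ² y² + β(e^{ay} - 1) + θ = 0. Then y is differentiable on (-∞, θ_c) with y'(θ) = 1/(b - σ² y(θ) - βa e^{a y(θ)}), y'(θ) > 0, and y'(θ) → +∞ as θ ↑ θ_c. -/
open Real Filter

/-!
Write the equation as `θ = F y` with `F t = b t - σ²t²/2 - β(e^{at} - 1)`. The slope
`F' t = b - σ²t - βa e^{at}` is strictly decreasing and vanishes at `y_c`, so `F` is strictly
increasing on `(-∞, y_c]` with `F y_c = θ_c`, and `F` tends to `-∞` at `-∞`. Hence every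
`θ ≤ θ_c` has a root in `(-∞, y_c]`, the smaller branch is the inverse of `F` on that
half-line, and the inverse function theorem gives `y' = 1 / F'(y)`. As `θ ↑ θ_c`,
`y θ → y_c` and `F'(y θ) ↓ 0`.
-/

open Set Topology

section RightInverse

variable {α γ : Type*} [LinearOrder α] [LinearOrder γ] {f : α → γ} {g : γ → α} {c : α}

theorem StrictMonoOn.leftInvOn_of_rightInvOn (hf : StrictMonoOn f (Iic c))
    (hg : MapsTo g (Iic (f c)) (Iic c)) (hfg : RightInvOn g f (Iic (f c))) :
    LeftInvOn g f (Iic c) := fun t ht =>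
  have hft : f t ∈ Iic (f c) := hf.monotoneOn ht self_mem_Iic ht
  hf.injOn (hg hft) ht (hfg hft)

theorem StrictMonoOn.strictMonoOn_of_rightInvOn (hf : StrictMonoOn f (Iic c))
    (hg : MapsTo g (Iic (f c)) (Iic c)) (hfg : RightInvOn g f (Iic (f c))) :
    StrictMonoOn g (Iic (f c)) := by
  intro θ₁ h₁ θ₂ h₂ hlt
  by_contra! hle
  have h := hf.monotoneOn (hg h₂) (hg h₁) hle
  rw [hfg h₁, hfg h₂] at h
  exact h.not_gt hlt

theorem mapsTo_Iio_of_rightInvOn (hg : MapsTo g (Iic (f c)) (Iic c))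
    (hfg : RightInvOn g f (Iic (f c))) : MapsTo g (Iio (f c)) (Iio c) := fun θ hθ =>
  (hg (mem_Iic_of_Iio hθ)).lt_of_ne fun h => hθ.ne (by rw [← hfg (mem_Iic_of_Iio hθ), h])

variable [TopologicalSpace α] [OrderTopology α] [DenselyOrdered α]
  [TopologicalSpace γ] [OrderTopology γ]

theorem StrictMonoOn.continuousOn_of_rightInvOn (hf : StrictMonoOn f (Iic c))
    (hg : MapsTo g (Iic (f c)) (Iic c)) (hfg : RightInvOn g f (Iic (f c))) :
    ContinuousOn g (Iic (f c)) := by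
  have hmono := hf.strictMonoOn_of_rightInvOn hg hfg
  have hsurj : SurjOn g (Iic (f c)) (Iic c) := fun t ht =>
    ⟨f t, hf.monotoneOn ht self_mem_Iic ht, hf.leftInvOn_of_rightInvOn hg hfg ht⟩
  intro θ hθ
  rcases (mem_Iic.1 hθ).lt_or_eq with hlt | rfl
  · refine (hmono.continuousAt_of_image_mem_nhds (Iic_mem_nhds hlt) ?_).continuousWithinAt
    exact mem_of_superset (Iic_mem_nhds (mapsTo_Iio_of_rightInvOn hg hfg hlt)) hsurj
  · refine hmono.continuousWithinAt_left_of_surjOn self_mem_nhdsWithin ?_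
    rw [hf.leftInvOn_of_rightInvOn hg hfg self_mem_Iic]
    exact hsurj.mono Subset.rfl Iio_subset_Iic_self

theorem StrictMonoOn.tendsto_nhdsLT_of_rightInvOn (hf : StrictMonoOn f (Iic c))
    (hg : MapsTo g (Iic (f c)) (Iic c)) (hfg : RightInvOn g f (Iic (f c))) :
    Tendsto g (𝓝[<] (f c)) (𝓝 c) := by
  have h := (hf.continuousOn_of_rightInvOn hg hfg (f c) self_mem_Iic).tendsto
  rw [hf.leftInvOn_of_rightInvOn hg hfg self_mem_Iic] at h
  exact h.mono_left (nhdsWithin_mono _ Iio_subset_Iic_self)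

end RightInverse

theorem StrictMonoOn.hasDerivAt_of_rightInvOn {f g : ℝ → ℝ} {c θ f' : ℝ}
    (hf : StrictMonoOn f (Iic c)) (hg : MapsTo g (Iic (f c)) (Iic c))
    (hfg : RightInvOn g f (Iic (f c))) (hθ : θ < f c) (hf' : HasDerivAt f f' (g θ))
    (hf'0 : f' ≠ 0) : HasDerivAt g f'⁻¹ θ := by
  refine hf'.of_local_left_inverse ?_ hf'0 ?_
  · exact (hf.continuousOn_of_rightInvOn hg hfg).continuousAt (Iic_mem_nhds hθ)
  · filter_upwards [Iic_mem_nhds hθ] using hfg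

noncomputable section SmallerBranch

variable (a b σ β : ℝ)

/-- The paper's `G(y, θ)` equals `θ - branchLevel a b σ β y`. -/
def branchLevel (t : ℝ) : ℝ := b * t - (1 / 2) * σ ^ 2 * t ^ 2 - β * (exp (a * t) - 1)

def branchSlope (t : ℝ) : ℝ := b - σ ^ 2 * t - β * a * exp (a * t)

variable {a b σ β}

theorem branchLevel_eq_iff {z θ : ℝ} :
    -b * z + (1 / 2) * σ ^ 2 * z ^ 2 + β * (exp (a * z) - 1) + θ = 0 ↔
      branchLevel a b σ β z = θ := by
  unfold branchLevel
  constructor <;> intro h <;> linarith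

theorem hasDerivAt_branchLevel (t : ℝ) :
    HasDerivAt (branchLevel a b σ β) (branchSlope a b σ β t) t := by
  refine ((((hasDerivAt_id t).const_mul b).sub
    ((hasDerivAt_pow 2 t).const_mul ((1 / 2) * σ ^ 2))).sub
      ((((hasDerivAt_id' t).const_mul a).exp.sub_const 1).const_mul β)).congr_deriv ?_
  simp only [branchSlope]
  ring

theorem continuous_branchLevel : Continuous (branchLevel a b σ β) :=
  continuous_iff_continuousAt.2 fun t => (hasDerivAt_branchLevel t).continuousAt

theorem continuous_branchSlope : Continuous (branchSlope a b σ β) := by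
  unfold branchSlope
  fun_prop

theorem strictAnti_branchSlope (ha : 0 < a) (hβ : 0 < β) :
    StrictAnti (branchSlope a b σ β) := by
  intro s t hst
  have hexp : exp (a * s) < exp (a * t) := exp_lt_exp.2 (mul_lt_mul_of_pos_left hst ha)
  have hσ : σ ^ 2 * s ≤ σ ^ 2 * t := mul_le_mul_of_nonneg_left hst.le (sq_nonneg σ)
  have hβa : β * a * exp (a * s) < β * a * exp (a * t) :=
    mul_lt_mul_of_pos_left hexp (mul_pos hβ ha)
  simp only [branchSlope]
  linarith

theorem branchSlope_pos_of_lt (ha : 0 < a) (hβ : 0 < β) {c t : ℝ}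
    (hc : branchSlope a b σ β c = 0) (ht : t < c) : 0 < branchSlope a b σ β t :=
  hc ▸ strictAnti_branchSlope ha hβ ht

theorem strictMonoOn_branchLevel (ha : 0 < a) (hβ : 0 < β) {c : ℝ}
    (hc : branchSlope a b σ β c = 0) : StrictMonoOn (branchLevel a b σ β) (Iic c) := by
  refine strictMonoOn_of_deriv_pos (convex_Iic c) continuous_branchLevel.continuousOn ?_
  intro t ht
  rw [interior_Iic] at ht
  rw [(hasDerivAt_branchLevel t).deriv]
  exact branchSlope_pos_of_lt ha hβ hc ht

theorem branchLevel_le (hβ : 0 ≤ β) (t : ℝ) : branchLevel a b σ β t ≤ b * t + β := by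
  have hsq : 0 ≤ (1 / 2) * σ ^ 2 * t ^ 2 := by positivity
  have hexp : 0 ≤ β * exp (a * t) := by positivity
  simp only [branchLevel]
  linarith

theorem tendsto_branchLevel_atBot (hb : 0 < b) (hβ : 0 ≤ β) :
    Tendsto (branchLevel a b σ β) atBot atBot :=
  tendsto_atBot_mono (branchLevel_le hβ)
    (tendsto_atBot_add_const_right _ β (tendsto_id.const_mul_atBot hb))

end SmallerBranch

theorem smaller_branch_derivative_general (a b σ β yc : ℝ)
    (ha : 0 < a) (hb : 0 < b) (hβ : 0 < β)
    (hyceq : b = σ ^ 2 * yc + β * a * Real.exp (a * yc))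
    (θc : ℝ)
    (hθc : θc = b * yc - (1 / 2) * σ ^ 2 * yc ^ 2 - β * (Real.exp (a * yc) - 1))
    (y : ℝ → ℝ)
    (hroot : ∀ θ, θ ≤ θc →
      -b * y θ + (1 / 2) * σ ^ 2 * (y θ) ^ 2 + β * (Real.exp (a * y θ) - 1) + θ = 0)
    (hsmall : ∀ θ, θ ≤ θc → ∀ z : ℝ,
      -b * z + (1 / 2) * σ ^ 2 * z ^ 2 + β * (Real.exp (a * z) - 1) + θ = 0 → y θ ≤ z) :
    (∀ θ, θ < θc →
      HasDerivAt y (1 / (b - σ ^ 2 * y θ - β * a * Real.exp (a * y θ))) θ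
      ∧ 0 < 1 / (b - σ ^ 2 * y θ - β * a * Real.exp (a * y θ)))
    ∧ Tendsto (fun θ => 1 / (b - σ ^ 2 * y θ - β * a * Real.exp (a * y θ)))
        (nhdsWithin θc (Set.Iio θc)) atTop := by
  have hslope : branchSlope a b σ β yc = 0 := by rw [branchSlope, hyceq]; ring
  have hF := strictMonoOn_branchLevel (b := b) (σ := σ) ha hβ hslope
  change θc = branchLevel a b σ β yc at hθc
  subst hθc
  have hfg : RightInvOn y (branchLevel a b σ β) (Iic (branchLevel a b σ β yc)) :=
    fun θ hθ => branchLevel_eq_iff.1 (hroot θ hθ)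
  have hg : MapsTo y (Iic (branchLevel a b σ β yc)) (Iic yc) := fun θ hθ => by
    obtain ⟨z, hz, hFz⟩ := intermediate_value_Iic continuous_branchLevel.continuousOn
      (tendsto_branchLevel_atBot hb hβ.le) hθ
    exact (hsmall θ hθ z (branchLevel_eq_iff.2 hFz)).trans hz
  have hpos : ∀ θ < branchLevel a b σ β yc, 0 < branchSlope a b σ β (y θ) := fun θ hθ =>
    branchSlope_pos_of_lt ha hβ hslope (mapsTo_Iio_of_rightInvOn hg hfg hθ)
  simp only [one_div]
  refine ⟨fun θ hθ => ⟨?_, inv_pos.2 (hpos θ hθ)⟩, ?_⟩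
  · exact hF.hasDerivAt_of_rightInvOn hg hfg hθ (hasDerivAt_branchLevel _) (hpos θ hθ).ne'
  · refine Tendsto.inv_tendsto_nhdsGT_zero (tendsto_nhdsWithin_iff.2 ⟨?_, ?_⟩)
    · exact hslope ▸ (continuous_branchSlope.tendsto yc).comp
        (hF.tendsto_nhdsLT_of_rightInvOn hg hfg)
    · exact eventually_nhdsWithin_of_forall hpos

/-- Differentiability of the smaller branch `y(θ)` of
`-by + σ²y²/2 + β(e^{ay}-1) + θ = 0`, with explicit derivative, positivity of the
derivative, and blow-up of the derivative as `θ ↑ θ_c`. -/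
theorem smaller_branch_derivative (a b σ β yc : ℝ)
    (ha : 0 < a) (hb : 0 < b) (hσ : 0 < σ) (hβ : 0 < β) (hba : a * β < b)
    (hyc : 0 < yc) (hyceq : b = σ ^ 2 * yc + β * a * Real.exp (a * yc))
    (θc : ℝ)
    (hθc : θc = b * yc - (1 / 2) * σ ^ 2 * yc ^ 2 - β * (Real.exp (a * yc) - 1))
    (y : ℝ → ℝ)
    (hroot : ∀ θ, θ ≤ θc →
      -b * y θ + (1 / 2) * σ ^ 2 * (y θ) ^ 2 + β * (Real.exp (a * y θ) - 1) + θ = 0)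
    (hsmall : ∀ θ, θ ≤ θc → ∀ z : ℝ,
      -b * z + (1 / 2) * σ ^ 2 * z ^ 2 + β * (Real.exp (a * z) - 1) + θ = 0 → y θ ≤ z) :
    (∀ θ, θ < θc →
      HasDerivAt y (1 / (b - σ ^ 2 * y θ - β * a * Real.exp (a * y θ))) θ
      ∧ 0 < 1 / (b - σ ^ 2 * y θ - β * a * Real.exp (a * y θ)))
    ∧ Tendsto (fun θ => 1 / (b - σ ^ 2 * y θ - β * a * Real.exp (a * y θ)))
        (nhdsWithin θc (Set.Iio θc)) atTop :=
  smaller_branch_derivative_general a b σ β yc ha hb hβ hyceq θc hθc y hroot hsmall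
end

section
/- Let a, b, σ, β > 0 with b > aβ. The maximum over y ≥ 0 of the function y ↦ (b y - (1/2)σ² y² + β)·(1/β)·e^{-a y} is attained at y_c = (σ² + ab - √((σ² + ab)² - 2aσ²(b - aβ)))/(a σ²), and equals ((b - σ² y_c)/(aβ)) e^{-a y_c}. -/
open Real

/-- The maximum over `y ≥ 0` of `(by - σ²y²/2 + β)·(1/β)·e^{-ay}` is attained at the
explicit `y_c` and equals `((b - σ² y_c)/(aβ)) e^{-a y_c}`. -/
theorem max_for_counting_ldp (a b σ β : ℝ)
    (ha : 0 < a) (hb : 0 < b) (hσ : 0 < σ) (hβ : 0 < β) (hba : a * β < b)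
    (yc : ℝ)
    (hyc : yc = (σ ^ 2 + a * b
        - Real.sqrt ((σ ^ 2 + a * b) ^ 2 - 2 * a * σ ^ 2 * (b - a * β))) / (a * σ ^ 2)) :
    IsGreatest
      {x : ℝ | ∃ y : ℝ, 0 ≤ y ∧
        x = (b * y - (1 / 2) * σ ^ 2 * y ^ 2 + β) * (1 / β) * Real.exp (-a * y)}
      ((b * yc - (1 / 2) * σ ^ 2 * yc ^ 2 + β) * (1 / β) * Real.exp (-a * yc))
    ∧ (b * yc - (1 / 2) * σ ^ 2 * yc ^ 2 + β) * (1 / β) * Real.exp (-a * yc)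
        = (b - σ ^ 2 * yc) / (a * β) * Real.exp (-a * yc) := by
  have hσ2 : (0:ℝ) < σ ^ 2 := by positivity
  have hDpos : (0:ℝ) < (σ ^ 2 + a * b) ^ 2 - 2 * a * σ ^ 2 * (b - a * β) := by
    have h : (σ ^ 2 + a * b) ^ 2 - 2 * a * σ ^ 2 * (b - a * β)
        = σ ^ 4 + (a * b) ^ 2 + 2 * (a * σ) ^ 2 * β := by ring
    rw [h]; positivity
  set s := Real.sqrt ((σ ^ 2 + a * b) ^ 2 - 2 * a * σ ^ 2 * (b - a * β)) with hs
  have hs0 : 0 ≤ s := Real.sqrt_nonneg _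
  have hs2 : s ^ 2 = (σ ^ 2 + a * b) ^ 2 - 2 * a * σ ^ 2 * (b - a * β) :=
    Real.sq_sqrt hDpos.le
  have hsσ : σ ^ 2 < s := by
    rw [hs, show ((σ ^ 2 + a * b) ^ 2 - 2 * a * σ ^ 2 * (b - a * β))
      = σ ^ 4 + (a * b) ^ 2 + 2 * (a * σ) ^ 2 * β from by ring]
    rw [Real.lt_sqrt (by positivity)]
    nlinarith [sq_nonneg (a * b), mul_pos (mul_pos (mul_pos ha ha) hσ2) hβ]
  have hsK : s < σ ^ 2 + a * b := by
    rw [hs, Real.sqrt_lt' (by positivity)]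
    nlinarith [mul_pos (mul_pos ha hσ2) (show (0:ℝ) < b - a * β by linarith)]
  have hycK : a * σ ^ 2 * yc = σ ^ 2 + a * b - s := by
    rw [hyc]; field_simp
  have h3 : 0 < a * σ ^ 2 * yc := by rw [hycK]; linarith
  have hyc0 : 0 < yc := by nlinarith [mul_pos ha hσ2]
  have h1 : (a * σ ^ 2 * yc) ^ 2 - 2 * (σ ^ 2 + a * b) * (a * σ ^ 2 * yc)
      + 2 * a * σ ^ 2 * (b - a * β) = 0 := by
    rw [hycK]; linear_combination hs2
  have hstat : b - σ ^ 2 * yc = a * (b * yc - (1 / 2) * σ ^ 2 * yc ^ 2 + β) := by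
    have h2 : 2 * a * σ ^ 2 * (b - σ ^ 2 * yc)
        = 2 * a * σ ^ 2 * (a * (b * yc - (1 / 2) * σ ^ 2 * yc ^ 2 + β)) := by
      linear_combination h1
    exact mul_left_cancel₀ (by positivity) h2
  have h4 : a * (b - σ ^ 2 * yc) = s - σ ^ 2 := by linear_combination -hycK
  have hbσ : 0 < b - σ ^ 2 * yc := by nlinarith [h4, hsσ]
  have hPc : 0 < b * yc - (1 / 2) * σ ^ 2 * yc ^ 2 + β := by nlinarith
  refine ⟨⟨⟨yc, hyc0.le, rfl⟩, ?_⟩, ?_⟩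
  · rintro x ⟨y, hy0, rfl⟩
    have tangent : b * y - (1 / 2) * σ ^ 2 * y ^ 2 + β
        ≤ (b * yc - (1 / 2) * σ ^ 2 * yc ^ 2 + β) * (1 + a * (y - yc)) := by
      nlinarith [sq_nonneg (y - yc), hσ2]
    have hexp : 1 + a * (y - yc) ≤ Real.exp (a * (y - yc)) := by
      have := Real.add_one_le_exp (a * (y - yc)); linarith
    have step2 : b * y - (1 / 2) * σ ^ 2 * y ^ 2 + β
        ≤ (b * yc - (1 / 2) * σ ^ 2 * yc ^ 2 + β) * Real.exp (a * (y - yc)) := by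
      calc b * y - (1 / 2) * σ ^ 2 * y ^ 2 + β
          ≤ (b * yc - (1 / 2) * σ ^ 2 * yc ^ 2 + β) * (1 + a * (y - yc)) := tangent
        _ ≤ (b * yc - (1 / 2) * σ ^ 2 * yc ^ 2 + β) * Real.exp (a * (y - yc)) :=
            mul_le_mul_of_nonneg_left hexp hPc.le
    have hE : Real.exp (a * (y - yc)) * Real.exp (-a * y) = Real.exp (-a * yc) := by
      rw [← Real.exp_add]; ring_nf
    have step3 : (b * y - (1 / 2) * σ ^ 2 * y ^ 2 + β) * Real.exp (-a * y)
        ≤ (b * yc - (1 / 2) * σ ^ 2 * yc ^ 2 + β) * Real.exp (-a * yc) := by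
      calc (b * y - (1 / 2) * σ ^ 2 * y ^ 2 + β) * Real.exp (-a * y)
          ≤ ((b * yc - (1 / 2) * σ ^ 2 * yc ^ 2 + β) * Real.exp (a * (y - yc)))
              * Real.exp (-a * y) :=
            mul_le_mul_of_nonneg_right step2 (Real.exp_pos _).le
        _ = (b * yc - (1 / 2) * σ ^ 2 * yc ^ 2 + β) * Real.exp (-a * yc) := by
            rw [mul_assoc, hE]
    have hβ' : 0 < 1 / β := by positivity
    calc (b * y - (1 / 2) * σ ^ 2 * y ^ 2 + β) * (1 / β) * Real.exp (-a * y)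
        = ((b * y - (1 / 2) * σ ^ 2 * y ^ 2 + β) * Real.exp (-a * y)) * (1 / β) := by ring
      _ ≤ ((b * yc - (1 / 2) * σ ^ 2 * yc ^ 2 + β) * Real.exp (-a * yc)) * (1 / β) :=
          mul_le_mul_of_nonneg_right step3 hβ'.le
      _ = (b * yc - (1 / 2) * σ ^ 2 * yc ^ 2 + β) * (1 / β) * Real.exp (-a * yc) := by ring
  · rw [hstat, mul_div_mul_left _ _ ha.ne']
    ring
end

section
/- Let a, b, σ, β > 0 with b > aβ and set θ_c = log((√(σ⁴ + a²b² + 2a²σ²β) - σ²)/(a²β)) - (σ² + ab - √(σ⁴ + a²b² + 2a²σ²β))/σ². Then θ_c > 0. -/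
open Real

set_option maxHeartbeats 1600000 in
/-- Positivity of the critical exponent `θ_c` in the LDP for `N_t / t`. -/
theorem theta_c_counting_positive (a b σ β : ℝ)
    (ha : 0 < a) (hb : 0 < b) (hσ : 0 < σ) (hβ : 0 < β) (hba : a * β < b) :
    0 < Real.log ((Real.sqrt (σ ^ 4 + a ^ 2 * b ^ 2 + 2 * a ^ 2 * σ ^ 2 * β) - σ ^ 2)
          / (a ^ 2 * β))
        - (σ ^ 2 + a * b - Real.sqrt (σ ^ 4 + a ^ 2 * b ^ 2 + 2 * a ^ 2 * σ ^ 2 * β))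
          / σ ^ 2 := by
  set E : ℝ := σ ^ 4 + a ^ 2 * b ^ 2 + 2 * a ^ 2 * σ ^ 2 * β with hEdef
  have hEpos : 0 < E := by positivity
  set s : ℝ := Real.sqrt E with hsdef
  have hs0 : 0 ≤ s := Real.sqrt_nonneg _
  have hs2 : s ^ 2 = E := Real.sq_sqrt hEpos.le
  clear_value s
  clear_value E
  have hσ2 : (0:ℝ) < σ ^ 2 := by positivity
  have hE1 : (σ ^ 2) ^ 2 < E := by
    have h : (0:ℝ) < a ^ 2 * b ^ 2 + 2 * a ^ 2 * σ ^ 2 * β := by positivity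
    rw [hEdef]; nlinarith [h]
  have hE2 : (a * b) ^ 2 < E := by
    have h : (0:ℝ) < σ ^ 4 + 2 * a ^ 2 * σ ^ 2 * β := by positivity
    rw [hEdef]; nlinarith [h]
  have hE3 : E < (σ ^ 2 + a * b) ^ 2 := by
    have h : 2 * a * σ ^ 2 * (a * β) < 2 * a * σ ^ 2 * b :=
      mul_lt_mul_of_pos_left hba (by positivity)
    rw [hEdef]; nlinarith [h]
  have hsgt : σ ^ 2 < s := by nlinarith [hE1, hs2, hs0, hσ2]
  have hab0 : (0:ℝ) ≤ a * b := by positivity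
  have hab : a * b < s := by nlinarith [hE2, hs2, hs0, hab0]
  have hslt : s < σ ^ 2 + a * b := by nlinarith [hE3, hs2, hs0, hσ2, hab0]
  have hK : 0 ≤ E + a * b * σ ^ 2 - a ^ 2 * β * σ ^ 2 := by
    have h : a ^ 2 * β * σ ^ 2 ≤ a * b * σ ^ 2 := by nlinarith [mul_lt_mul_of_pos_left hba (show (0:ℝ) < a * σ ^ 2 by positivity)]
    linarith [hEpos]
  have hsM0 : 0 ≤ s * (σ ^ 2 + a * b) := mul_nonneg hs0 (by positivity)
  have hsm2 : (s * (σ ^ 2 + a * b)) ^ 2 = E * (σ ^ 2 + a * b) ^ 2 := by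
    rw [mul_pow, hs2]
  have hid : (E + a * b * σ ^ 2 - a ^ 2 * β * σ ^ 2) ^ 2 - E * (σ ^ 2 + a * b) ^ 2
      = (a * σ ^ 2 * (b - a * β)) ^ 2 := by rw [hEdef]; ring
  have h1 : (s * (σ ^ 2 + a * b)) ^ 2 ≤ (E + a * b * σ ^ 2 - a ^ 2 * β * σ ^ 2) ^ 2 := by
    linarith [hid, sq_nonneg (a * σ ^ 2 * (b - a * β)), hsm2]
  have hsM : s * (σ ^ 2 + a * b) ≤ E + a * b * σ ^ 2 - a ^ 2 * β * σ ^ 2 := by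
    have h2 := Real.sqrt_le_sqrt h1
    rwa [Real.sqrt_sq hsM0, Real.sqrt_sq hK] at h2
  have hkey : a ^ 2 * β * σ ^ 2 ≤ (s - σ ^ 2) * (s - a * b) := by
    nlinarith [hs2, hsM]
  set x : ℝ := (σ ^ 2 + a * b - s) / σ ^ 2 with hxdef
  clear_value x
  have hx0 : 0 < x := by rw [hxdef]; exact div_pos (by linarith) hσ2
  have hx1 : x < 1 := by rw [hxdef, div_lt_one hσ2]; linarith
  have h1x : 0 < 1 - x := by linarith
  have h1xval : 1 - x = (s - a * b) / σ ^ 2 := by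
    rw [hxdef]; field_simp; ring
  -- key algebraic inequality
  have hexplt : Real.exp x < 1 / (1 - x) := by
    rw [lt_div_iff₀ h1x]
    have hneg : -x + 1 < Real.exp (-x) := Real.add_one_lt_exp (by linarith)
    calc Real.exp x * (1 - x) < Real.exp x * Real.exp (-x) := by
          apply mul_lt_mul_of_pos_left (by linarith) (Real.exp_pos x)
      _ = 1 := by rw [← Real.exp_add]; simp
  have harg : Real.exp x < (s - σ ^ 2) / (a ^ 2 * β) := by
    have h2 : 1 / (1 - x) ≤ (s - σ ^ 2) / (a ^ 2 * β) := by
      rw [div_le_div_iff₀ h1x (by positivity)]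
      have heq : (s - σ ^ 2) * (1 - x) = (s - σ ^ 2) * (s - a * b) / σ ^ 2 := by
        rw [h1xval]; ring
      rw [heq, le_div_iff₀ hσ2]
      linarith [hkey]
    linarith [hexplt, h2]
  have hzpos : 0 < (s - σ ^ 2) / (a ^ 2 * β) := div_pos (by linarith) (by positivity)
  rw [sub_pos, Real.lt_log_iff_exp_lt hzpos]
  exact harg
end

section
/- Let a, b, σ, β > 0 with b > aβ. The equation -b x + (1/2)σ² x² + β(e^{a x} - 1) - 1 = 0 has a unique negative solution x_*. -/
/-!
The left-hand side `H` is strictly decreasing on `(-∞, 0]`: its derivative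
`-b + σ²x + aβe^{ax}` is below `aβ - b < 0` there. Since `H 0 = -1` while
`H x ≥ -bx - β - 1` becomes nonnegative at `x = -(β + 1)/b`, the intermediate value theorem
gives a negative root, and strict monotonicity makes it unique.
-/

open Real Set

theorem existsUnique_lt_and_eq_zero_of_strictAntiOn {f : ℝ → ℝ} {c x₀ : ℝ}
    (hcont : ContinuousOn f (Iic c)) (hanti : StrictAntiOn f (Iic c)) (hc : f c < 0)
    (hx₀ : x₀ ≤ c) (hfx₀ : 0 ≤ f x₀) : ∃! x, x < c ∧ f x = 0 := by
  obtain ⟨x, hx, hfx⟩ : (0 : ℝ) ∈ f '' Icc x₀ c :=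
    intermediate_value_Icc' hx₀ (hcont.mono Icc_subset_Iic_self) ⟨hc.le, hfx₀⟩
  have hxc : x < c := hx.2.lt_of_ne (by rintro rfl; linarith)
  refine ⟨x, ⟨hxc, hfx⟩, fun y ⟨hyc, hfy⟩ => ?_⟩
  exact hanti.injOn hyc.le hxc.le (hfy.trans hfx.symm)

noncomputable def bondYieldFn (a b σ β x : ℝ) : ℝ :=
  -b * x + (1 / 2) * σ ^ 2 * x ^ 2 + β * (exp (a * x) - 1) - 1

section

variable (a b σ β : ℝ)

theorem continuous_bondYieldFn : Continuous (bondYieldFn a b σ β) := by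
  unfold bondYieldFn
  fun_prop

theorem hasDerivAt_bondYieldFn (x : ℝ) :
    HasDerivAt (bondYieldFn a b σ β) (-b + σ ^ 2 * x + a * β * exp (a * x)) x := by
  have hexp : HasDerivAt (fun x => exp (a * x)) (exp (a * x) * a) x :=
    ((hasDerivAt_id x).const_mul a).exp.congr_deriv (by simp)
  unfold bondYieldFn
  refine ((((hasDerivAt_id' x).const_mul (-b)).add
    ((hasDerivAt_pow 2 x).const_mul ((1 / 2) * σ ^ 2))).add
    ((hexp.sub_const 1).const_mul β)).sub_const 1 |>.congr_deriv ?_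
  push_cast
  ring

theorem bondYieldFn_zero : bondYieldFn a b σ β 0 = -1 := by
  simp [bondYieldFn]

variable {β}

theorem neg_mul_sub_sub_le_bondYieldFn (hβ : 0 ≤ β) (x : ℝ) :
    -b * x - β - 1 ≤ bondYieldFn a b σ β x := by
  have : 0 ≤ β * exp (a * x) := mul_nonneg hβ (exp_pos _).le
  have : 0 ≤ (1 / 2) * σ ^ 2 * x ^ 2 := by positivity
  unfold bondYieldFn
  linarith

variable {a b}

theorem strictAntiOn_bondYieldFn (ha : 0 ≤ a) (hβ : 0 ≤ β) (hba : a * β < b) :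
    StrictAntiOn (bondYieldFn a b σ β) (Iic 0) := by
  refine strictAntiOn_of_deriv_neg (convex_Iic 0) (continuous_bondYieldFn a b σ β).continuousOn
    fun x hx => ?_
  rw [interior_Iic] at hx
  rw [(hasDerivAt_bondYieldFn a b σ β x).deriv]
  have hexp : exp (a * x) ≤ 1 := exp_le_one_iff.2 (mul_nonpos_of_nonneg_of_nonpos ha hx.le)
  have hσx : σ ^ 2 * x ≤ 0 := mul_nonpos_of_nonneg_of_nonpos (sq_nonneg σ) hx.le
  nlinarith [mul_nonneg ha hβ]

end

theorem bond_yield_root_general (a b σ β : ℝ)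
    (ha : 0 < a) (hβ : 0 < β) (hba : a * β < b) :
    ∃! x : ℝ, x < 0
      ∧ -b * x + (1 / 2) * σ ^ 2 * x ^ 2 + β * (Real.exp (a * x) - 1) - 1 = 0 := by
  show ∃! x, x < 0 ∧ bondYieldFn a b σ β x = 0
  have hb : 0 < b := (mul_pos ha hβ).trans hba
  have hx₀ : -(β + 1) / b ≤ 0 := div_nonpos_of_nonpos_of_nonneg (by linarith) hb.le
  have hfx₀ : 0 ≤ bondYieldFn a b σ β (-(β + 1) / b) := by
    have hbx₀ : -b * (-(β + 1) / b) = β + 1 := by field_simp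
    linarith [neg_mul_sub_sub_le_bondYieldFn a b σ hβ.le (-(β + 1) / b)]
  exact existsUnique_lt_and_eq_zero_of_strictAntiOn
    (continuous_bondYieldFn a b σ β).continuousOn
    (strictAntiOn_bondYieldFn σ ha.le hβ.le hba)
    (by rw [bondYieldFn_zero]; norm_num) hx₀ hfx₀

/-- The bond-yield equation `-bx + σ²x²/2 + β(e^{ax}-1) - 1 = 0` has a unique negative
solution. -/
theorem bond_yield_root (a b σ β : ℝ)
    (ha : 0 < a) (hb : 0 < b) (hσ : 0 < σ) (hβ : 0 < β) (hba : a * β < b) :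
    ∃! x : ℝ, x < 0
      ∧ -b * x + (1 / 2) * σ ^ 2 * x ^ 2 + β * (Real.exp (a * x) - 1) - 1 = 0 :=
  bond_yield_root_general a b σ β ha hβ hba
end

section
/- Let b, c, σ, a, α, β > 0 with b > aβ, and fix θ > 0. Suppose A: [0,∞) → ℝ solves A'(t) = -b A(t) + (1/2)σ² A(t)² + β(e^{a A(t)} - 1) with A(0) = -θ. Then A(t) < 0 for all t ≥ 0 and A(t) → 0 as t → ∞. -/
/-!
The origin is an equilibrium of the smooth vector field
`G y = -b y + σ² y² / 2 + β (exp (a y) - 1)`, so by uniqueness of solutions a trajectory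
started at `-θ < 0` never reaches it, and `A` stays negative. On the other hand
`G y + (b - a β) y = σ² y² / 2 + β (exp (a y) - 1 - a y) ≥ 0`, so `exp ((b - a β) t) A t` is
nondecreasing; hence `-θ exp (-(b - a β) t) ≤ A t < 0`, and `A t → 0` exponentially fast.
-/

open Real Filter Set Topology

noncomputable def riccatiField (a b σ β y : ℝ) : ℝ :=
  -b * y + (1 / 2) * σ ^ 2 * y ^ 2 + β * (exp (a * y) - 1)

theorem LocallyLipschitz.eqOn_const_of_hasDerivAt {E : Type*} [NormedAddCommGroup E]
    [NormedSpace ℝ E] {v : E → E} {p : E} (hv : LocallyLipschitz v) (hp : v p = 0)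
    {f : ℝ → E} {a b : ℝ} (hf : ∀ t ∈ Icc a b, HasDerivAt f (v (f t)) t) (hb : f b = p) :
    EqOn f (fun _ ↦ p) (Icc a b) := by
  have hcont : ContinuousOn f (Icc a b) :=
    fun t ht ↦ (hf t ht).continuousAt.continuousWithinAt
  obtain ⟨K, hK⟩ := hv.locallyLipschitzOn.exists_lipschitzOnWith_of_compact
    (isCompact_Icc.image_of_continuousOn hcont)
  refine ODE_solution_unique_of_mem_Icc_left (fun _ _ ↦ hK) hcont
    (fun t ht ↦ (hf t (Ioc_subset_Icc_self ht)).hasDerivWithinAt)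
    (fun t ht ↦ mem_image_of_mem f (Ioc_subset_Icc_self ht)) continuousOn_const
    (fun t _ ↦ by simpa [hp] using hasDerivWithinAt_const t (Iic t) p)
    (fun t ht ↦ ⟨b, ⟨ht.1.le.trans ht.2, le_rfl⟩, hb⟩) hb

theorem LocallyLipschitz.lt_of_hasDerivAt {v : ℝ → ℝ} {p : ℝ} (hv : LocallyLipschitz v)
    (hp : v p = 0) {f : ℝ → ℝ} {t₀ : ℝ} (hf : ∀ t, t₀ ≤ t → HasDerivAt f (v (f t)) t)
    (h₀ : f t₀ < p) : ∀ t, t₀ ≤ t → f t < p := by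
  intro t ht
  by_contra! hpt
  obtain ⟨s, hs, hfs⟩ := intermediate_value_Icc ht
    (fun r hr ↦ (hf r hr.1).continuousAt.continuousWithinAt) ⟨h₀.le, hpt⟩
  exact h₀.ne (hv.eqOn_const_of_hasDerivAt hp (fun r hr ↦ hf r hr.1) hfs ⟨le_rfl, hs.1⟩)

theorem mul_exp_le_of_hasDerivAt {f f' : ℝ → ℝ} {c t₀ : ℝ}
    (hf : ∀ t, t₀ ≤ t → HasDerivAt f (f' t) t)
    (hf' : ∀ t, t₀ ≤ t → -c * f t ≤ f' t) :
    ∀ t, t₀ ≤ t → f t₀ * exp (-(c * (t - t₀))) ≤ f t := by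
  set g : ℝ → ℝ := fun t ↦ exp (c * (t - t₀)) * f t
  have hg : ∀ t, t₀ ≤ t → HasDerivAt g (exp (c * (t - t₀)) * (c * f t + f' t)) t := by
    intro t ht
    refine (((hasDerivAt_id' t).sub_const t₀).const_mul c).exp.fun_mul (hf t ht)
      |>.congr_deriv ?_
    ring
  have hmono : MonotoneOn g (Ici t₀) := by
    refine monotoneOn_of_hasDerivWithinAt_nonneg (convex_Ici t₀)
      (fun t ht ↦ (hg t ht).continuousAt.continuousWithinAt)
      (fun t ht ↦ (hg t (interior_subset ht)).hasDerivWithinAt) fun t ht ↦ ?_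
    exact mul_nonneg (exp_pos _).le (by linarith [hf' t (interior_subset ht)])
  intro t ht
  have hgt : f t₀ ≤ g t := by
    simpa only [g, sub_self, mul_zero, exp_zero, one_mul] using hmono self_mem_Ici ht ht
  calc f t₀ * exp (-(c * (t - t₀))) ≤ g t * exp (-(c * (t - t₀))) :=
        mul_le_mul_of_nonneg_right hgt (exp_pos _).le
    _ = f t := by
      rw [mul_right_comm, ← exp_add, add_neg_cancel, exp_zero, one_mul]

section Riccati

variable {a b σ β : ℝ}

theorem riccatiField_zero : riccatiField a b σ β 0 = 0 := by
  simp [riccatiField]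

theorem contDiff_riccatiField : ContDiff ℝ 1 (riccatiField a b σ β) := by
  unfold riccatiField
  fun_prop

theorem neg_mul_le_riccatiField (hβ : 0 ≤ β) (y : ℝ) :
    -(b - a * β) * y ≤ riccatiField a b σ β y := by
  have hexp : a * y + 1 ≤ exp (a * y) := add_one_le_exp _
  have hσ : 0 ≤ (1 / 2) * σ ^ 2 * y ^ 2 := by positivity
  have hβexp : β * (a * y) ≤ β * (exp (a * y) - 1) := mul_le_mul_of_nonneg_left (by linarith) hβ
  simp only [riccatiField]
  linarith

end Riccati

theorem riccati_negative_to_zero_general (a b σ β θ : ℝ)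
    (hβ : 0 < β)
    (hba : a * β < b) (hθ : 0 < θ)
    (A : ℝ → ℝ)
    (hA : ∀ t, 0 ≤ t →
      HasDerivAt A (-b * A t + (1 / 2) * σ ^ 2 * (A t) ^ 2
        + β * (Real.exp (a * A t) - 1)) t)
    (hA0 : A 0 = -θ) :
    (∀ t, 0 ≤ t → A t < 0) ∧ Tendsto A atTop (nhds 0) := by
  have hA' : ∀ t, 0 ≤ t → HasDerivAt A (riccatiField a b σ β (A t)) t := hA
  have hneg : ∀ t, 0 ≤ t → A t < 0 :=
    contDiff_riccatiField.locallyLipschitz.lt_of_hasDerivAt riccatiField_zero hA'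
      (by linarith)
  have hlow : ∀ t, 0 ≤ t → -θ * exp (-((b - a * β) * t)) ≤ A t := by
    simpa [hA0] using mul_exp_le_of_hasDerivAt hA' fun t _ ↦ neg_mul_le_riccatiField hβ.le (A t)
  have hdecay : Tendsto (fun t ↦ -θ * exp (-((b - a * β) * t))) atTop (𝓝 0) := by
    simpa using (tendsto_exp_neg_atTop_nhds_zero.comp
      (tendsto_id.const_mul_atTop (sub_pos.2 hba))).const_mul (-θ)
  refine ⟨hneg, tendsto_of_tendsto_of_tendsto_of_le_of_le' hdecay tendsto_const_nhds ?_ ?_⟩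
  · filter_upwards [eventually_ge_atTop 0] with t ht using hlow t ht
  · filter_upwards [eventually_ge_atTop 0] with t ht using (hneg t ht).le

/-- The Riccati exponent `A(t)` of the Laplace transform stays negative and tends to `0`. -/
theorem riccati_negative_to_zero (a b c σ α β θ : ℝ)
    (ha : 0 < a) (hb : 0 < b) (hc : 0 < c) (hσ : 0 < σ) (hα : 0 < α) (hβ : 0 < β)
    (hba : a * β < b) (hθ : 0 < θ)
    (A : ℝ → ℝ)
    (hA : ∀ t, 0 ≤ t →
      HasDerivAt A (-b * A t + (1 / 2) * σ ^ 2 * (A t) ^ 2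
        + β * (Real.exp (a * A t) - 1)) t)
    (hA0 : A 0 = -θ) :
    (∀ t, 0 ≤ t → A t < 0) ∧ Tendsto A atTop (nhds 0) :=
  riccati_negative_to_zero_general a b σ β θ hβ hba hθ A hA hA0
end
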